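/- arXiv:1910.12608 — 2 statements merged into one kernel-verified Lean document; each statement's English description precedes it below -/
import Mathlib

section
/- Let n ≥ 1, K ≥ 2 be integers and a : {1,…,n} → ℕ with M := Σ_{i=1}^n a_i > 0. Consider the min-max-min problem with feasible set X = {0,1}^n, nominal costs ĉ_i = −a_i, deviations d_i = M for all i, budget Γ = K−1 and K solutions. Then min over (x^1,…,x^K) ∈ X^K of max over c ∈ U^{K−1}(ĉ,d) of min over k ∈ {1,…,K} of c^⊤x^k equals −M/K if and only if there exists a partition of {1,…,n} into K pairwise disjoint sets S_1,…,S_K with S_1 ∪ … ∪ S_K = {1,…,n} and Σ_{i∈S_j} a_i = M/K for every j ∈ {1,…,K}. -/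
/-!
A deviation of an item costs `M`, more than any solution weighs, so a `K`-tuple of solutions has
worst-case value `≤ -M/K` iff every set `D` of fewer than `K` items is avoided by a solution of
weight `≥ M/K`. This holds iff the solutions are pairwise disjoint and all of weight `≥ M/K`:
a light solution, or two solutions sharing an item, lets `K - 1` items hit every heavy solution,
while `K` disjoint sets cannot all be hit by fewer than `K` items. Disjoint sets of weight
`≥ M/K` have weight exactly `M/K` and extend to a partition. No tuple does better than `-M/K`:
one that did would be such a family, whose nominal cost is already `-M/K`.
-/

open Finset

/-- The discrete budgeted uncertainty set
`U^Γ(ĉ,d) = { c : c i = ĉ i + δ i * d i, δ ∈ {0,1}^n, ∑ i, δ i ≤ Γ }`,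
with the 0-1 vector `δ` identified with the set `D` of its nonzero coordinates. -/
noncomputable def budgetU (n : ℕ) (chat d : Fin n → ℝ) (Γ : ℕ) : Finset (Fin n → ℝ) :=
  (((Finset.univ : Finset (Fin n)).powerset.filter fun D => D.card ≤ Γ).image
    fun D i => chat i + (if i ∈ D then d i else 0))

lemma budgetU_nonempty (n : ℕ) (chat d : Fin n → ℝ) (Γ : ℕ) :
    (budgetU n chat d Γ).Nonempty :=
  ⟨_, Finset.mem_image.mpr ⟨∅, by simp, rfl⟩⟩

open Function

section Combinatorics

variable {ι κ : Type*} [DecidableEq ι]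

theorem exists_card_le_forall_not_disjoint (X : κ → Finset ι) (s : Finset κ)
    (hX : ∀ k ∈ s, (X k).Nonempty) :
    ∃ D : Finset ι, #D ≤ #s ∧ ∀ k ∈ s, ¬Disjoint (X k) D := by
  choose f hf using hX
  refine ⟨s.attach.image fun k => f k.1 k.2, card_image_le.trans_eq s.card_attach, ?_⟩
  intro k hk hdisj
  exact disjoint_left.1 hdisj (hf k hk) (mem_image_of_mem _ (mem_attach s ⟨k, hk⟩))

variable [Fintype κ]

def AvoidsSmallSets (H : Finset ι → Prop) (X : κ → Finset ι) : Prop :=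
  ∀ D : Finset ι, #D < Fintype.card κ → ∃ k, Disjoint (X k) D ∧ H (X k)

variable {H : Finset ι → Prop} {X : κ → Finset ι}

theorem AvoidsSmallSets.forall (hH : ∀ x, H x → x.Nonempty) (hX : AvoidsSmallSets H X) :
    ∀ k, H (X k) := by
  by_contra! ⟨k₀, hk₀⟩
  classical
  obtain ⟨D, hD, hit⟩ := exists_card_le_forall_not_disjoint X {k | H (X k)}
    fun k hk => hH _ (mem_filter.1 hk).2
  obtain ⟨k, hk, hHk⟩ := hX D (hD.trans_lt (card_lt_univ_of_notMem (by simpa using hk₀)))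
  exact hit k (by simpa using hHk) hk

theorem AvoidsSmallSets.pairwise_disjoint [DecidableEq κ] (hne : ∀ k, (X k).Nonempty)
    (hX : AvoidsSmallSets H X) : Pairwise (Disjoint on X) := by
  intro j l hjl
  by_contra hjl'
  obtain ⟨i, hij, hil⟩ := not_disjoint_iff.1 hjl'
  obtain ⟨D, hD, hit⟩ := exists_card_le_forall_not_disjoint X ((univ.erase j).erase l)
    fun k _ => hne k
  have hcard : #(insert i D) < Fintype.card κ :=
    calc #(insert i D) ≤ #((univ.erase j).erase l) + 1 := (card_insert_le i D).trans (by omega)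
      _ = #(univ.erase j) := card_erase_add_one (mem_erase.2 ⟨hjl.symm, mem_univ l⟩)
      _ < #(univ : Finset κ) := card_erase_lt_of_mem (mem_univ j)
      _ = Fintype.card κ := card_univ
  obtain ⟨k, hk, -⟩ := hX _ hcard
  by_cases hkj : k = j
  · subst hkj; exact disjoint_left.1 hk hij (mem_insert_self i D)
  by_cases hkl : k = l
  · subst hkl; exact disjoint_left.1 hk hil (mem_insert_self i D)
  exact hit k (by simp [hkj, hkl]) (hk.mono_right (subset_insert i D))

theorem avoidsSmallSets_of_pairwise_disjoint (hH : ∀ k, H (X k))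
    (hX : Pairwise (Disjoint on X)) : AvoidsSmallSets H X := by
  intro D hD
  by_contra! hmeet
  have hcover : Fintype.card κ ≤ #(univ.biUnion fun k => X k ∩ D) :=
    card_le_card_biUnion (fun j _ l _ hjl => (hX hjl).mono inter_subset_left inter_subset_left)
      fun k _ => not_disjoint_iff_nonempty_inter.1 fun hk => hmeet k hk (hH k)
  have hsub : (univ.biUnion fun k => X k ∩ D) ⊆ D := biUnion_subset.2 fun k _ => inter_subset_right
  exact hD.not_ge (hcover.trans (card_le_card hsub))

theorem avoidsSmallSets_iff [DecidableEq κ] (hH : ∀ x, H x → x.Nonempty) :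
    AvoidsSmallSets H X ↔ (∀ k, H (X k)) ∧ Pairwise (Disjoint on X) := by
  refine ⟨fun hX => ?_, fun h => avoidsSmallSets_of_pairwise_disjoint h.1 h.2⟩
  have hall := hX.forall hH
  exact ⟨hall, hX.pairwise_disjoint (fun k => hH _ (hall k))⟩

theorem exists_partition_superset [Fintype ι] [Nonempty κ] [DecidableEq κ]
    (hX : Pairwise (Disjoint on X)) :
    ∃ S : κ → Finset ι, Pairwise (Disjoint on S) ∧ univ.biUnion S = univ ∧ ∀ k, X k ⊆ S k := by
  obtain ⟨k₀⟩ := ‹Nonempty κ›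
  set R := (univ.biUnion X)ᶜ
  have hR : ∀ k, Disjoint (X k) R :=
    fun k => disjoint_compl_right_iff.2 (subset_biUnion_of_mem X (mem_univ k))
  refine ⟨update X k₀ (X k₀ ∪ R), ?_, ?_, fun k => ?_⟩
  · intro j l hjl
    rcases eq_or_ne j k₀ with rfl | hj
    · simpa [onFun, hjl.symm] using disjoint_union_left.2 ⟨hX hjl, (hR l).symm⟩
    rcases eq_or_ne l k₀ with rfl | hl
    · simpa [onFun, hj] using disjoint_union_right.2 ⟨hX hjl, hR j⟩
    · simpa [onFun, hj, hl] using hX hjl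
  · refine eq_univ_of_forall fun i => ?_
    by_cases hi : i ∈ univ.biUnion X
    · obtain ⟨k, -, hik⟩ := mem_biUnion.1 hi
      rcases eq_or_ne k k₀ with rfl | hk
      · exact mem_biUnion.2 ⟨k, mem_univ k, by simp [hik]⟩
      · exact mem_biUnion.2 ⟨k, mem_univ k, by simpa [hk] using hik⟩
    · exact mem_biUnion.2 ⟨k₀, mem_univ k₀, by simp [R, hi]⟩
  · rcases eq_or_ne k k₀ with rfl | hk
    · simp
    · simp [hk]

end Combinatorics

section Weights

variable {ι κ : Type*} [Fintype ι] [Fintype κ] {w : ι → ℝ}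

theorem sum_eq_of_pairwise_disjoint (hw : ∀ i, 0 ≤ w i) {X : κ → Finset ι}
    (hX : Pairwise (Disjoint on X)) {t : ℝ} (ht : ∀ k, t ≤ ∑ i ∈ X k, w i)
    (htotal : ∑ i, w i = Fintype.card κ * t) (k : κ) : ∑ i ∈ X k, w i = t := by
  classical
  have hle : ∑ k, ∑ i ∈ X k, w i ≤ ∑ _k : κ, t :=
    calc ∑ k, ∑ i ∈ X k, w i = ∑ i ∈ univ.biUnion X, w i := (sum_biUnion (hX.set_pairwise _)).symm
      _ ≤ ∑ i, w i := sum_le_sum_of_subset_of_nonneg (subset_univ _) fun i _ _ => hw i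
      _ = ∑ _k : κ, t := by simp [htotal]
  have heq := le_antisymm (sum_le_sum fun k _ => ht k) hle
  exact ((sum_eq_sum_iff_of_le fun k _ => ht k).1 heq k (mem_univ k)).symm

theorem exists_partition_sum_eq [DecidableEq ι] [Nonempty κ] [DecidableEq κ] (hw : ∀ i, 0 ≤ w i)
    {X : κ → Finset ι} (hX : Pairwise (Disjoint on X)) {t : ℝ} (ht : ∀ k, t ≤ ∑ i ∈ X k, w i)
    (htotal : ∑ i, w i = Fintype.card κ * t) :
    ∃ S : κ → Finset ι, Pairwise (Disjoint on S) ∧ univ.biUnion S = univ ∧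
      ∀ k, ∑ i ∈ S k, w i = t := by
  obtain ⟨S, hS, hcover, hXS⟩ := exists_partition_superset hX
  have hSt : ∀ k, t ≤ ∑ i ∈ S k, w i :=
    fun k => (ht k).trans (sum_le_sum_of_subset_of_nonneg (hXS k) fun i _ _ => hw i)
  exact ⟨S, hS, hcover, sum_eq_of_pairwise_disjoint hw hS hSt htotal⟩

end Weights

section Budgeted

variable {n : ℕ} {chat d : Fin n → ℝ} {Γ : ℕ}

theorem mem_budgetU {D : Finset (Fin n)} (hD : #D ≤ Γ) :
    (fun i => chat i + if i ∈ D then d i else 0) ∈ budgetU n chat d Γ :=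
  mem_image.2 ⟨D, by simpa using hD, rfl⟩

theorem budgetU_sup'_le_iff (g : (Fin n → ℝ) → ℝ) (r : ℝ) :
    (budgetU n chat d Γ).sup' (budgetU_nonempty _ _ _ _) g ≤ r ↔
      ∀ D : Finset (Fin n), #D ≤ Γ → g (fun i => chat i + if i ∈ D then d i else 0) ≤ r := by
  simp [budgetU]

noncomputable def robustValue {κ : Type*} [Fintype κ] [Nonempty κ] (chat d : Fin n → ℝ) (Γ : ℕ)
    (xs : κ → Finset (Fin n)) : ℝ :=
  (budgetU n chat d Γ).sup' (budgetU_nonempty _ _ _ _)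
    fun c => univ.inf' univ_nonempty fun k => ∑ i ∈ xs k, c i

theorem robustValue_le_iff {κ : Type*} [Fintype κ] [Nonempty κ] (xs : κ → Finset (Fin n))
    (r : ℝ) :
    robustValue chat d Γ xs ≤ r ↔ ∀ D : Finset (Fin n), #D ≤ Γ →
      ∃ k, ∑ i ∈ xs k, (chat i + if i ∈ D then d i else 0) ≤ r := by
  simp only [robustValue, budgetU_sup'_le_iff, inf'_le_iff, mem_univ, true_and]

end Budgeted

theorem sum_neg_add_ite_le_neg_iff {ι : Type*} [DecidableEq ι] {w : ι → ℝ} {M t : ℝ}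
    (hM : 0 ≤ M) (ht : 0 < t) {x D : Finset ι} (hx : ∑ i ∈ x, w i ≤ M) :
    ∑ i ∈ x, (-w i + if i ∈ D then M else 0) ≤ -t ↔ Disjoint x D ∧ t ≤ ∑ i ∈ x, w i := by
  rw [sum_add_distrib, sum_neg_distrib, sum_ite_mem, sum_const, nsmul_eq_mul]
  by_cases hxD : Disjoint x D
  · simp [disjoint_iff_inter_eq_empty.1 hxD, hxD]
  · have hone : (1 : ℝ) ≤ #(x ∩ D) := by
      exact_mod_cast card_pos.2 (not_disjoint_iff_nonempty_inter.1 hxD)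
    simp only [hxD, false_and, iff_false, not_le]
    -- meeting `D` costs at least `M - ∑ i ∈ x, w i ≥ 0`
    nlinarith

section Reduction

variable {n : ℕ} {κ : Type*} [Fintype κ] [Nonempty κ] [DecidableEq κ] {w : Fin n → ℝ} {M t : ℝ}
  {Γ : ℕ}

theorem robustValue_le_neg_iff (hw : ∀ i, 0 ≤ w i) (hM : ∑ i, w i = M) (ht : 0 < t)
    (hΓ : Γ + 1 = Fintype.card κ) (xs : κ → Finset (Fin n)) :
    robustValue (fun i => -w i) (fun _ => M) Γ xs ≤ -t ↔
      (∀ k, t ≤ ∑ i ∈ xs k, w i) ∧ Pairwise (Disjoint on xs) := by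
  have hle : ∀ x : Finset (Fin n), ∑ i ∈ x, w i ≤ M :=
    fun x => hM ▸ sum_le_sum_of_subset_of_nonneg (subset_univ x) fun i _ _ => hw i
  have hM0 : 0 ≤ M := hM ▸ sum_nonneg fun i _ => hw i
  rw [robustValue_le_iff, ← avoidsSmallSets_iff (H := fun x => t ≤ ∑ i ∈ x, w i)
    fun x hx => nonempty_of_sum_ne_zero (ht.trans_le hx).ne']
  refine forall_congr' fun D => ?_
  simp only [sum_neg_add_ite_le_neg_iff hM0 ht (hle _), Nat.le_iff_lt_add_one, hΓ]

theorem neg_le_robustValue (hw : ∀ i, 0 ≤ w i) (hM : ∑ i, w i = M) (ht : 0 < t)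
    (htotal : M = Fintype.card κ * t) (hΓ : Γ + 1 = Fintype.card κ) (xs : κ → Finset (Fin n)) :
    -t ≤ robustValue (fun i => -w i) (fun _ => M) Γ xs := by
  by_contra! hlt
  obtain ⟨hheavy, hdisj⟩ := (robustValue_le_neg_iff hw hM ht hΓ xs).1 hlt.le
  have hnominal : -t ≤ robustValue (fun i => -w i) (fun _ => M) Γ xs := by
    refine le_trans ?_ (le_sup' _ (mem_budgetU (D := ∅) (Nat.zero_le Γ)))
    refine le_inf' _ _ fun k _ => ?_
    simp [sum_eq_of_pairwise_disjoint hw hdisj hheavy (hM.trans htotal) k]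
  exact hnominal.not_gt hlt

end Reduction

/-- correctness of the reduction from the K-way equal-sum partition
problem to the min-max-min unconstrained binary problem with `ĉ = -a`, `d = M`,
budget `Γ = K - 1` and `K` solutions. -/
theorem kway_partition_reduction (n K : ℕ) (hK : 2 ≤ K)
    (a : Fin n → ℕ) (M : ℕ) (hM : M = ∑ i, a i) (hMpos : 0 < M) :
    ((Finset.univ : Finset (Fin K → Finset (Fin n))).inf' univ_nonempty
        fun xs => (budgetU n (fun i => -(a i : ℝ)) (fun _ => (M : ℝ)) (K - 1)).sup'
          (budgetU_nonempty _ _ _ _)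
          fun c => Finset.univ.inf' (Finset.univ_nonempty_iff.mpr ⟨⟨0, by omega⟩⟩)
            fun k => ∑ i ∈ xs k, c i) = -(M : ℝ) / K ↔
    ∃ S : Fin K → Finset (Fin n),
      (∀ j l, j ≠ l → Disjoint (S j) (S l)) ∧
      Finset.univ.biUnion S = Finset.univ ∧
      ∀ j, (∑ i ∈ S j, (a i : ℝ)) = (M : ℝ) / K := by
  have : Nonempty (Fin K) := ⟨⟨0, by omega⟩⟩
  have hw : ∀ i, 0 ≤ (a i : ℝ) := fun i => Nat.cast_nonneg _
  have hsum : ∑ i, (a i : ℝ) = M := by rw [hM]; push_cast; rfl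
  have ht : (0 : ℝ) < M / K := by positivity
  have htotal : (M : ℝ) = Fintype.card (Fin K) * (M / K) := by
    rw [Fintype.card_fin]; field_simp
  have hΓ : K - 1 + 1 = Fintype.card (Fin K) := by rw [Fintype.card_fin]; omega
  change (univ : Finset (Fin K → Finset (Fin n))).inf' univ_nonempty
    (robustValue (fun i => -(a i : ℝ)) (fun _ => (M : ℝ)) (K - 1)) = _ ↔ _
  rw [neg_div]
  constructor
  · intro hopt
    obtain ⟨xs, -, hxs⟩ := exists_mem_eq_inf' univ_nonempty
      (robustValue (κ := Fin K) (fun i => -(a i : ℝ)) (fun _ => (M : ℝ)) (K - 1))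
    obtain ⟨hheavy, hdisj⟩ := (robustValue_le_neg_iff hw hsum ht hΓ xs).1 (hxs ▸ hopt).le
    obtain ⟨S, hS, hcover, hSsum⟩ := exists_partition_sum_eq hw hdisj hheavy (hsum.trans htotal)
    exact ⟨S, fun j l hjl => hS hjl, hcover, hSsum⟩
  · rintro ⟨S, hS, -, hSsum⟩
    have hS_opt := (robustValue_le_neg_iff hw hsum ht hΓ S).2
      ⟨fun k => (hSsum k).ge, fun j l hjl => hS j l hjl⟩
    exact le_antisymm ((inf'_le _ (mem_univ S)).trans hS_opt)
      (le_inf' _ _ fun xs _ => neg_le_robustValue hw hsum ht htotal hΓ xs)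
end

section
/- Let m ≥ 1 and B ≥ 1 be integers and c : {1,…,3m} → ℕ with 4·c_i > B and 2·c_i < B for all i and Σ_{i=1}^{3m} c_i = m·B. Consider the min-max-min selection problem in dimension n = 3m with feasible set X = { x ∈ {0,1}^{3m} : Σ_i x_i = 3 }, nominal costs ĉ_i = c_i, deviations d_i = M := m·B for all i, budget Γ = m−1 and K = m solutions. Then min over (x^1,…,x^m) ∈ X^m of max over c' ∈ U^{m−1}(ĉ,d) of min over k ∈ {1,…,m} of (c')^⊤x^k is at most B if and only if there exist pairwise disjoint sets A_1,…,A_m ⊆ {1,…,3m} with A_1 ∪ … ∪ A_m = {1,…,3m} and Σ_{i∈A_j} c_i = B for every j ∈ {1,…,m}. -/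
open Finset

/-- The feasible set of the selection problem: all `p`-element subsets of `[n]`.
It is nonempty whenever `p ≤ n`. -/
lemma selection_nonempty (n p : ℕ) (h : p ≤ n) :
    (Finset.univ.filter fun S : Finset (Fin n) => S.card = p).Nonempty := by
  obtain ⟨t, -, ht⟩ := Finset.exists_subset_card_eq
    (s := (Finset.univ : Finset (Fin n))) (n := p) (by simpa using h)
  exact ⟨t, Finset.mem_filter.mpr ⟨Finset.mem_univ _, ht⟩⟩

/-!
A 3-partition gives `m` feasible 3-sets of cost `B` each; a budget of `m - 1` deviations
cannot hit all of these disjoint sets, and a single deviation already pushes the cost of a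
set above `B`. Conversely, if `m` selected 3-sets guarantee cost at most `B`, two of them
sharing an item could all be hit with `m - 1` deviations, and for each `k` the adversary can
hit every set but the `k`-th; so the sets are disjoint, cover all `3m` items, and have cost
at most `B`, hence exactly `B` because the costs total `mB`.
-/

open Function

lemma forall_mem_budgetU_iff {n : ℕ} {chat d : Fin n → ℝ} {Γ : ℕ} {P : (Fin n → ℝ) → Prop} :
    (∀ c' ∈ budgetU n chat d Γ, P c') ↔
      ∀ D : Finset (Fin n), D.card ≤ Γ → P fun i => chat i + if i ∈ D then d i else 0 := by
  simp [budgetU]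

lemma sum_add_ite_mem_le_iff {α : Type*} [DecidableEq α] {S D : Finset α} {c : α → ℝ}
    {M b : ℝ} (hM : 0 ≤ M) (hb : b < M + ∑ i ∈ S, c i) :
    ∑ i ∈ S, (c i + if i ∈ D then M else 0) ≤ b ↔ Disjoint S D ∧ ∑ i ∈ S, c i ≤ b := by
  rw [sum_add_distrib, sum_ite_mem, sum_const, nsmul_eq_mul]
  by_cases hSD : Disjoint S D
  · simp [disjoint_iff_inter_eq_empty.mp hSD, hSD]
  · have hcard : (1 : ℝ) ≤ (S ∩ D).card := by
      exact_mod_cast card_pos.mpr (not_disjoint_iff_nonempty_inter.mp hSD)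
    simp only [hSD, false_and, iff_false, not_le]
    nlinarith

lemma sup'_budgetU_inf'_le_iff {n : ℕ} {ι : Type*} [Fintype ι] (hι : (univ : Finset ι).Nonempty)
    (chat : Fin n → ℝ) {M b : ℝ} (hM : 0 ≤ M) (Γ : ℕ) (xs : ι → Finset (Fin n))
    (hxs : ∀ k, b < M + ∑ i ∈ xs k, chat i) :
    (budgetU n chat (fun _ => M) Γ).sup' (budgetU_nonempty _ _ _ _)
        (fun c' => univ.inf' hι fun k => ∑ i ∈ xs k, c' i) ≤ b ↔
      ∀ D : Finset (Fin n), D.card ≤ Γ →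
        ∃ k, Disjoint (xs k) D ∧ ∑ i ∈ xs k, chat i ≤ b := by
  simp only [sup'_le_iff, forall_mem_budgetU_iff, inf'_le_iff, mem_univ, true_and]
  exact forall₂_congr fun D _ => exists_congr fun k => sum_add_ite_mem_le_iff hM (hxs k)

section HittingSets

variable {ι α : Type*} [Fintype ι] [DecidableEq α] {xs : ι → Finset α}

lemma exists_disjoint_of_card_lt (hxs : Pairwise (Disjoint on xs)) {D : Finset α}
    (hD : D.card < Fintype.card ι) : ∃ k, Disjoint (xs k) D := by
  by_contra! hhit
  choose e hexs heD using fun k => not_disjoint_iff.mp (hhit k)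
  have he : Set.InjOn e (univ : Finset ι) := fun j _ l _ hjl => by
    by_contra hne
    exact disjoint_left.mp (hxs hne) (hexs j) (hjl ▸ hexs l)
  have := card_le_card_of_injOn e (fun k _ => heD k) he
  rw [card_univ] at this
  omega

/-- A choice of one element from each set that is not injective gives a set of fewer than
`card ι` points meeting every set. -/
lemma injective_of_forall_exists_disjoint
    (h : ∀ D : Finset α, D.card < Fintype.card ι → ∃ k, Disjoint (xs k) D)
    (q : ι → α) (hq : ∀ k, q k ∈ xs k) : Function.Injective q := by
  by_contra hninj
  have hcard : (univ.image q).card < Fintype.card ι := by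
    refine (card_image_le.trans_eq card_univ).lt_of_ne fun heq => hninj ?_
    rw [← card_univ, card_image_iff, coe_univ] at heq
    exact Set.injOn_univ.mp heq
  obtain ⟨k, hk⟩ := h _ hcard
  exact disjoint_left.mp hk (hq k) (mem_image_of_mem q (mem_univ k))

lemma pairwise_disjoint_of_forall_exists_disjoint (hne : ∀ k, (xs k).Nonempty)
    (h : ∀ D : Finset α, D.card < Fintype.card ι → ∃ k, Disjoint (xs k) D) :
    Pairwise (Disjoint on xs) := by
  classical
  intro j l hjl
  by_contra hjoint
  obtain ⟨e, hej, hel⟩ := not_disjoint_iff.mp hjoint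
  let q : ι → α := fun k => if k = j ∨ k = l then e else (hne k).choose
  have hq : ∀ k, q k ∈ xs k := fun k => by
    by_cases hk : k = j ∨ k = l
    · rcases hk with rfl | rfl <;> simpa [q]
    · simpa [q, hk] using (hne k).choose_spec
  exact hjl (injective_of_forall_exists_disjoint h q hq (by simp [q]))

lemma forall_of_forall_exists_disjoint (hne : ∀ k, (xs k).Nonempty) {p : ι → Prop}
    (h : ∀ D : Finset α, D.card < Fintype.card ι → ∃ k, Disjoint (xs k) D ∧ p k) (k : ι) :
    p k := by
  classical
  let pick : ι → α := fun k => (hne k).choose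
  have hD : ((univ.erase k).image pick).card < Fintype.card ι :=
    card_image_le.trans_lt (card_erase_lt_of_mem (mem_univ k))
  obtain ⟨k', hdisj, hk'⟩ := h _ hD
  obtain rfl : k' = k := by
    by_contra hne'
    exact disjoint_left.mp hdisj (hne k').choose_spec
      (mem_image_of_mem pick (mem_erase.mpr ⟨hne', mem_univ k'⟩))
  exact hk'

end HittingSets

lemma biUnion_eq_univ_of_sum_card_eq {ι α : Type*} [Fintype α] [DecidableEq α]
    {s : Finset ι} {xs : ι → Finset α} (hxs : Pairwise (Disjoint on xs))
    (hcard : ∑ k ∈ s, (xs k).card = Fintype.card α) : s.biUnion xs = univ :=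
  eq_univ_of_card _ (by rw [card_biUnion fun j _ l _ hjl => hxs hjl, hcard])

lemma sum_eq_of_sum_le_of_isPartition {ι α M : Type*} [Fintype ι] [Fintype α] [DecidableEq α]
    [AddCommMonoid M] [PartialOrder M] [IsOrderedCancelAddMonoid M]
    {A : ι → Finset α} (hdisj : Pairwise (Disjoint on A)) (hcover : univ.biUnion A = univ)
    {c : α → M} {B : M} (hle : ∀ j, ∑ i ∈ A j, c i ≤ B)
    (hsum : ∑ i, c i = Fintype.card ι • B) (j : ι) : ∑ i ∈ A j, c i = B := by
  have htotal : ∑ k, ∑ i ∈ A k, c i = ∑ _k : ι, B := by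
    rw [← sum_biUnion fun j _ l _ hjl => hdisj hjl, hcover, hsum, sum_const, card_univ]
  exact (sum_eq_sum_iff_of_le fun k _ => hle k).mp htotal j (mem_univ j)

lemma card_eq_three_of_sum_eq {α : Type*} {s : Finset α} {c : α → ℕ} {B : ℕ} (hB : 0 < B)
    (hlow : ∀ i ∈ s, B < 4 * c i) (hhigh : ∀ i ∈ s, 2 * c i < B) (hs : ∑ i ∈ s, c i = B) :
    s.card = 3 := by
  have hne : s.Nonempty := nonempty_of_sum_ne_zero (hs ▸ hB.ne')
  have hlt4 : s.card * B < 4 * B := calc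
    s.card * B = ∑ _i ∈ s, B := by simp
    _ < ∑ i ∈ s, 4 * c i := sum_lt_sum_of_nonempty hne hlow
    _ = 4 * B := by rw [← mul_sum, hs]
  have hgt2 : 2 * B < s.card * B := calc
    2 * B = ∑ i ∈ s, 2 * c i := by rw [← mul_sum, hs]
    _ < ∑ _i ∈ s, B := sum_lt_sum_of_nonempty hne hhigh
    _ = s.card * B := by simp
  have := lt_of_mul_lt_mul_right hlt4
  have := lt_of_mul_lt_mul_right hgt2
  omega

/-- correctness of the reduction from the 3-partition problem to the
min-max-min selection problem with `p = 3`, `ĉ = c`, `d = M = m·B`, budget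
`Γ = m - 1` and `K = m` solutions. -/
theorem three_partition_reduction (m B : ℕ) (hm : 1 ≤ m)
    (c : Fin (3 * m) → ℕ)
    (hlow : ∀ i, B < 4 * c i) (hhigh : ∀ i, 2 * c i < B)
    (hsum : ∑ i, c i = m * B) :
    ((Fintype.piFinset fun _ : Fin m =>
        Finset.univ.filter fun S : Finset (Fin (3 * m)) => S.card = 3).inf'
        (Fintype.piFinset_nonempty.mpr fun _ =>
          selection_nonempty (3 * m) 3 (by omega))
        fun xs => (budgetU (3 * m) (fun i => (c i : ℝ))
            (fun _ => ((m : ℝ) * B)) (m - 1)).sup'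
          (budgetU_nonempty _ _ _ _)
          fun c' => Finset.univ.inf' (Finset.univ_nonempty_iff.mpr ⟨⟨0, hm⟩⟩)
            fun k => ∑ i ∈ xs k, c' i) ≤ (B : ℝ) ↔
    ∃ A : Fin m → Finset (Fin (3 * m)),
      (∀ j l, j ≠ l → Disjoint (A j) (A l)) ∧
      Finset.univ.biUnion A = Finset.univ ∧
      ∀ j, (∑ i ∈ A j, c i) = B := by
  have hB : 0 < B := by have := hhigh ⟨0, by omega⟩; omega
  have hslack : ∀ S : Finset (Fin (3 * m)), S.Nonempty →
      (B : ℝ) < m * B + ∑ i ∈ S, (c i : ℝ) := fun S ⟨i, hi⟩ => by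
    have hci : 1 ≤ ∑ i ∈ S, c i := (by have := hlow i; omega : 1 ≤ c i).trans
      (single_le_sum (fun _ _ => Nat.zero_le _) hi)
    exact_mod_cast (by nlinarith : B < m * B + ∑ i ∈ S, c i)
  have hsmall : ∀ D : Finset (Fin (3 * m)), D.card ≤ m - 1 ↔ D.card < Fintype.card (Fin m) :=
    fun D => by rw [Fintype.card_fin]; omega
  simp only [inf'_le_iff, Fintype.mem_piFinset, mem_filter, mem_univ, true_and]
  constructor
  · rintro ⟨xs, hxs3, hval⟩
    have hne : ∀ k, (xs k).Nonempty := fun k => card_pos.mp (by simp [hxs3])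
    simp only [sup'_budgetU_inf'_le_iff _ _ (by positivity) _ xs fun k => hslack _ (hne k),
      hsmall, ← Nat.cast_sum, Nat.cast_le] at hval
    have hdisj := pairwise_disjoint_of_forall_exists_disjoint hne
      fun D hD => (hval D hD).imp fun _ => And.left
    have hcover := biUnion_eq_univ_of_sum_card_eq hdisj (s := univ) (by simp [hxs3, mul_comm])
    refine ⟨xs, fun j l hjl => hdisj hjl, hcover, ?_⟩
    exact sum_eq_of_sum_le_of_isPartition hdisj hcover
      (forall_of_forall_exists_disjoint hne hval) (by simpa [mul_comm] using hsum)
  · rintro ⟨A, hdisj, hcover, hsumA⟩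
    have hA3 : ∀ j, (A j).card = 3 := fun j =>
      card_eq_three_of_sum_eq hB (fun i _ => hlow i) (fun i _ => hhigh i) (hsumA j)
    refine ⟨A, hA3, ?_⟩
    rw [sup'_budgetU_inf'_le_iff _ _ (by positivity) _ A
      fun k => hslack _ (card_pos.mp (by simp [hA3]))]
    intro D hD
    obtain ⟨k, hk⟩ := exists_disjoint_of_card_lt (fun j l => hdisj j l) ((hsmall D).mp hD)
    exact ⟨k, hk, by exact_mod_cast (hsumA k).le⟩
end
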